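/- Let (α₁,α₂) be a good pair with canonical representation (x,y,z). Then x ≥ (1+2√7)/9, i.e. x ≥ 1−2τ where τ = (4−√7)/9. -/
import Mathlib


noncomputable def tau : ℝ := (4 - Real.sqrt 7) / 9

/-- `(x, y, z)` is the canonical representation of `(α₁, α₂)`. -/
def IsCanonRep (α₁ α₂ x y z : ℝ) : Prop :=
  x ∈ Set.Icc (0:ℝ) 1 ∧ y ∈ Set.Icc (0:ℝ) 1 ∧ z ∈ Set.Icc (0:ℝ) 1 ∧
    x + y + z = 1 ∧ 1/2 ≤ x ∧ α₁ = x^2 + y^2 ∧ α₂ = x^2 + z^2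

/-- `(α₁, α₂)` is a good pair. -/
noncomputable def GoodPair (α₁ α₂ : ℝ) : Prop :=
  α₁ ∈ Set.Icc (0:ℝ) 1 ∧ α₂ ∈ Set.Icc (0:ℝ) 1 ∧
  max (1/4) ((α₁ + Real.sqrt (2*α₁ - 1))/2) ≤ α₂ ∧
  max (max α₂ (1 - α₂)) ((1 + tau^2)/2) ≤ α₁ ∧
  ∀ x y z : ℝ, IsCanonRep α₁ α₂ x y z → 1 ≤ 2*x^2 + z^2

lemma Qpos_aux (x s : ℝ) (h1 : 1/2 ≤ x) (h2 : x ≤ 7/10) (h3 : (2.6:ℝ) ≤ s) (h4 : s ≤ 2.65) :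
    0 < 8 * x ^ 3 + (-136 + 16 * s) / 9 * x ^ 2 + (736 - 256 * s) / 81 * x
        + (-976 + 1072 * s) / 729 := by
  nlinarith [mul_nonneg (sub_nonneg.2 h1) (sub_nonneg.2 h2),
    mul_nonneg (mul_nonneg (sub_nonneg.2 h1) (sub_nonneg.2 h1)) (sub_nonneg.2 h2),
    mul_nonneg (mul_nonneg (sub_nonneg.2 h1) (sub_nonneg.2 h2)) (sub_nonneg.2 h2),
    mul_nonneg (sub_nonneg.2 h3) (sub_nonneg.2 h1),
    mul_nonneg (sub_nonneg.2 h3) (sub_nonneg.2 h2),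
    mul_nonneg (mul_nonneg (sub_nonneg.2 h3) (sub_nonneg.2 h1)) (sub_nonneg.2 h2),
    mul_nonneg (mul_nonneg (sub_nonneg.2 h3) (sub_nonneg.2 h1)) (sub_nonneg.2 h1)]

theorem goodPair_canonical_x_lower_bound
    (α₁ α₂ x y z : ℝ) (hgood : GoodPair α₁ α₂) (hcanon : IsCanonRep α₁ α₂ x y z) :
    (1 + 2 * Real.sqrt 7) / 9 ≤ x ∧ 1 - 2 * tau ≤ x := by
  obtain ⟨_, _, _, h4, h5⟩ := hgood
  obtain ⟨hx01, hy01, hz01, hsum, hxhalf, hA1, hA2⟩ := hcanon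
  set s : ℝ := Real.sqrt 7 with hs_def
  have hs2 : s ^ 2 = 7 := Real.sq_sqrt (by norm_num)
  have hs0 : 0 ≤ s := Real.sqrt_nonneg 7
  have hslb : (2.6 : ℝ) ≤ s := by nlinarith
  have hsub : s ≤ 2.65 := by nlinarith
  have hα₁ : (1 + tau ^ 2) / 2 ≤ α₁ := le_trans (le_max_right _ _) h4
  have h2xz : 1 ≤ 2 * x ^ 2 + z ^ 2 :=
    h5 x y z ⟨hx01, hy01, hz01, hsum, hxhalf, hA1, hA2⟩
  have htau : tau = (4 - s) / 9 := rfl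
  have key : (1 + 2 * s) / 9 ≤ x := by
    by_contra hc
    push_neg at hc
    have hy0 : 0 ≤ y := hy01.1
    have hz0 : 0 ≤ z := hz01.1
    have hA : (1 + tau ^ 2) / 2 - x ^ 2 ≤ y ^ 2 := by
      rw [hA1] at hα₁; linarith
    have hB : 1 - 2 * x ^ 2 ≤ z ^ 2 := by linarith
    have hApos : 0 < (1 + tau ^ 2) / 2 - x ^ 2 := by
      rw [htau]; nlinarith
    have hBpos : 0 < 1 - 2 * x ^ 2 := by nlinarith
    have hprod : ((1 + tau ^ 2) / 2 - x ^ 2) * (1 - 2 * x ^ 2) ≤ (y * z) ^ 2 := by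
      calc ((1 + tau ^ 2) / 2 - x ^ 2) * (1 - 2 * x ^ 2) ≤ y ^ 2 * z ^ 2 :=
            mul_le_mul hA hB (le_of_lt hBpos) (by positivity)
        _ = (y * z) ^ 2 := by ring
    have hyz0 : 0 ≤ y * z := mul_nonneg hy0 hz0
    have hyzsum : y + z = 1 - x := by linarith
    have hsq : (1 - x) ^ 2 = y ^ 2 + z ^ 2 + 2 * (y * z) := by rw [← hyzsum]; ring
    have hD : 2 * (y * z) ≤ (1 - x) ^ 2 - ((1 + tau ^ 2) / 2 - x ^ 2) - (1 - 2 * x ^ 2) := by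
      linarith
    set A : ℝ := (1 + tau ^ 2) / 2 - x ^ 2 with hAdef
    set B : ℝ := 1 - 2 * x ^ 2 with hBdef
    set D : ℝ := (1 - x) ^ 2 - A - B with hDdef
    have hP : 0 ≤ D ^ 2 - 4 * (A * B) := by
      have h1 : (2 * (y * z)) ^ 2 ≤ D ^ 2 := by
        apply sq_le_sq' (by linarith) hD
      have h2 : (2 * (y * z)) ^ 2 = 4 * ((y * z) ^ 2) := by ring
      linarith
    have hfac : D ^ 2 - 4 * (A * B)
        = (x - (1 + 2 * s) / 9) *
          (8 * x ^ 3 + (-136 + 16 * s) / 9 * x ^ 2 + (736 - 256 * s) / 81 * x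
            + (-976 + 1072 * s) / 729) := by
      rw [hDdef, hAdef, hBdef, htau]
      linear_combination (32/81 * x ^ 2 + (-512/729 + 2/81) * x + 80/243 - 149/8748 - 4/6561 * s + 1/26244 * s ^ 2) * hs2
    have hQpos : 0 < 8 * x ^ 3 + (-136 + 16 * s) / 9 * x ^ 2 + (736 - 256 * s) / 81 * x
        + (-976 + 1072 * s) / 729 :=
      Qpos_aux x s hxhalf (by linarith) hslb hsub
    have hneg : (x - (1 + 2 * s) / 9) *
          (8 * x ^ 3 + (-136 + 16 * s) / 9 * x ^ 2 + (736 - 256 * s) / 81 * x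
            + (-976 + 1072 * s) / 729) < 0 :=
      mul_neg_of_neg_of_pos (by linarith) hQpos
    rw [hfac] at hP
    linarith
  refine ⟨key, ?_⟩
  rw [htau]; linarith
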